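/- Consider a parallel phase with n independent branches, where branch i produces a sequence of tokens and, for each t, the conditional distribution of token y_{i,t} depends only on the shared prefix and the branch's own previous tokens y_{i,<t} (never on sibling branches). Then for any two valid schedules—total orders of token-generation events that respect within-branch token order—the joint distribution over all branch outputs (y_1, …, y_n) is the same. In particular, the joint distribution factorizes as the product of the per-branch distributions, independent of interleaving. -/
import Mathlib


open scoped BigOperators

variable {n : ℕ} {τ : Type*}

/-- Run one branch for `t` more tokens from current output `ys`, sampling each
token from the branch's kernel `p` applied to its own previous tokens. -/
noncomputable def genBranch (p : List τ → PMF τ) : ℕ → List τ → PMF (List τ)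
  | 0, ys => PMF.pure ys
  | t + 1, ys => (p ys).bind fun y => genBranch p t (ys ++ [y])

/-- Execute a schedule `s` (a list of branch indices: each occurrence of `i` is
one token-generation event of branch `i`) from the current per-branch outputs
`st`. The token sampled for branch `i` depends only on branch `i`'s own
previous tokens (and the fixed prefix, absorbed into `p i`). -/
noncomputable def runSchedule (p : Fin n → List τ → PMF τ) :
    List (Fin n) → (Fin n → List τ) → PMF (Fin n → List τ)
  | [], st => PMF.pure st
  | i :: s, st =>
      (p i (st i)).bind fun y =>
        runSchedule p s (Function.update st i (st i ++ [y]))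

lemma runSchedule_apply_eq_prod (p : Fin n → List τ → PMF τ) :
    ∀ (s : List (Fin n)) (st out : Fin n → List τ),
      runSchedule p s st out = ∏ j, genBranch (p j) (s.count j) (st j) (out j) := by
  intro s
  induction s with
  | nil =>
      intro st out
      by_cases h : out = st
      · subst h; simp [runSchedule, genBranch, PMF.pure_apply]
      · obtain ⟨j, hj⟩ := Function.ne_iff.mp h
        rw [Finset.prod_eq_zero (Finset.mem_univ j)]
        · simp [runSchedule, PMF.pure_apply, h]
        · simp [genBranch, PMF.pure_apply, hj]
  | cons i s ih =>
      intro st out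
      have key : ∀ y, runSchedule p s (Function.update st i (st i ++ [y])) out =
          genBranch (p i) (s.count i) (st i ++ [y]) (out i) *
            ∏ j ∈ {i}ᶜ, genBranch (p j) (s.count j) (st j) (out j) := by
        intro y
        rw [ih]
        rw [Fintype.prod_eq_mul_prod_compl i]
        simp only [Function.update_self]
        congr 1
        refine Finset.prod_congr rfl fun j hj => ?_
        have : j ≠ i := by simpa using hj
        rw [Function.update_of_ne this]
      have lhs : runSchedule p (i :: s) st out =
          ∑' y, p i (st i) y * runSchedule p s (Function.update st i (st i ++ [y])) out := by
        simp [runSchedule, PMF.bind_apply]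
      rw [lhs]
      simp only [key]
      simp only [← mul_assoc]
      rw [ENNReal.tsum_mul_right]
      have : (∑' y, p i (st i) y * genBranch (p i) (s.count i) (st i ++ [y]) (out i)) =
          genBranch (p i) (s.count i + 1) (st i) (out i) := by
        simp [genBranch, PMF.bind_apply]
      rw [this, Fintype.prod_eq_mul_prod_compl i]
      congr 1
      · simp [List.count_cons]
      · refine Finset.prod_congr rfl fun j hj => ?_
        have hji : j ≠ i := by simpa using hj
        rw [List.count_cons]
        simp [hji.symm]

/-- Schedule invariance under stochastic decoding. Any two valid
schedules (interleavings with the same number of token events per branch, i.e.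
permutations of one another) induce the same joint distribution over branch
outputs, and this joint law factorizes as the product of the per-branch laws. -/
theorem schedule_invariance_stochastic (p : Fin n → List τ → PMF τ)
    (L : Fin n → ℕ) :
    (∀ s₁ s₂ : List (Fin n), s₁.Perm s₂ →
        runSchedule p s₁ (fun _ => []) = runSchedule p s₂ (fun _ => [])) ∧
    (∀ s : List (Fin n), (∀ i, s.count i = L i) →
        ∀ out : Fin n → List τ,
          runSchedule p s (fun _ => []) out =
            ∏ i, genBranch (p i) (L i) [] (out i)) := by
  constructor
  · intro s₁ s₂ hperm
    ext out
    rw [runSchedule_apply_eq_prod, runSchedule_apply_eq_prod]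
    exact Finset.prod_congr rfl fun j _ => by rw [hperm.count_eq]
  · intro s hs out
    rw [runSchedule_apply_eq_prod]
    exact Finset.prod_congr rfl fun j _ => by rw [hs j]
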